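/- arXiv:0812.1462 — 3 statements merged into one kernel-verified Lean document; each statement's English description precedes it below -/
import Mathlib

section
/- Let Γ be a propositional theory, S a set of atoms containing all head atoms of Γ, and X a set of atoms. If X classically satisfies Γ, then X ∩ S classically satisfies the reduct Γ^X. -/
inductive PForm (α : Type) : Type where
  | bot : PForm α
  | atom : α → PForm α
  | and : PForm α → PForm α → PForm α
  | or : PForm α → PForm α → PForm α
  | imp : PForm α → PForm α → PForm α

namespace PForm

variable {α : Type}

def top : PForm α := imp bot bot

def neg (F : PForm α) : PForm α := imp F bot

def sat (X : Set α) : PForm α → Prop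
  | bot => False
  | atom a => a ∈ X
  | and F G => sat X F ∧ sat X G
  | or F G => sat X F ∨ sat X G
  | imp F G => sat X F → sat X G

open Classical in
noncomputable def reduct (X : Set α) : PForm α → PForm α
  | bot => bot
  | atom a => if a ∈ X then atom a else bot
  | and F G => if sat X (and F G) then and (reduct X F) (reduct X G) else bot
  | or F G => if sat X (or F G) then or (reduct X F) (reduct X G) else bot
  | imp F G => if sat X (imp F G) then imp (reduct X F) (reduct X G) else bot

def headAtoms : PForm α → Set α
  | bot => ∅
  | atom a => {a}
  | and F G => headAtoms F ∪ headAtoms G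
  | or F G => headAtoms F ∪ headAtoms G
  | imp _ G => headAtoms G

def atomsOf : PForm α → Set α
  | bot => ∅
  | atom a => {a}
  | and F G => atomsOf F ∪ atomsOf G
  | or F G => atomsOf F ∪ atomsOf G
  | imp F G => atomsOf F ∪ atomsOf G

def htSat (X Y : Set α) : PForm α → Prop
  | bot => False
  | atom a => a ∈ X
  | and F G => htSat X Y F ∧ htSat X Y G
  | or F G => htSat X Y F ∨ htSat X Y G
  | imp F G => (htSat X Y F → htSat X Y G) ∧ sat Y (imp F G)

end PForm

variable {α : Type}

/-- Satisfaction of a theory (set of formulas). -/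
def satTh (X : Set α) (Γ : Set (PForm α)) : Prop := ∀ F ∈ Γ, PForm.sat X F

/-- The reduct of a theory relative to X. -/
noncomputable def reductTh (X : Set α) (Γ : Set (PForm α)) : Set (PForm α) :=
  PForm.reduct X '' Γ

/-- X is a stable model of Γ iff X is a minimal set satisfying Γ^X. -/
def StableModel (Γ : Set (PForm α)) (X : Set α) : Prop :=
  satTh X (reductTh X Γ) ∧ ∀ Y : Set α, Y ⊂ X → ¬ satTh Y (reductTh X Γ)

def htSatTh (X Y : Set α) (Γ : Set (PForm α)) : Prop := ∀ F ∈ Γ, PForm.htSat X Y F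

def theoryHeadAtoms (Γ : Set (PForm α)) : Set α := ⋃ F ∈ Γ, PForm.headAtoms F

lemma sat_of_sat_reduct (X Y : Set α) : ∀ F : PForm α,
    PForm.sat Y (PForm.reduct X F) → PForm.sat X F := by
  intro F
  induction F with
  | bot => intro h; exact h
  | atom a =>
    simp only [PForm.reduct]
    split
    · intro _; assumption
    · intro h; exact h.elim
  | and F G ihF ihG =>
    simp only [PForm.reduct]; split
    · intro _; assumption
    · intro h; exact h.elim
  | or F G ihF ihG =>
    simp only [PForm.reduct]; split
    · intro _; assumption
    · intro h; exact h.elim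
  | imp F G ihF ihG =>
    simp only [PForm.reduct]; split
    · intro _; assumption
    · intro h; exact h.elim

lemma sat_inter_reduct (X S : Set α) : ∀ F : PForm α,
    PForm.headAtoms F ⊆ S → PForm.sat X F → PForm.sat (X ∩ S) (PForm.reduct X F) := by
  intro F
  induction F with
  | bot => intro _ h; exact h
  | atom a =>
    intro hH h
    have h' : a ∈ X := h
    simp only [PForm.reduct, if_pos h']
    exact ⟨h', hH rfl⟩
  | and F G ihF ihG =>
    intro hH h
    simp only [PForm.reduct, if_pos h]
    exact ⟨ihF (fun a ha => hH (Or.inl ha)) h.1, ihG (fun a ha => hH (Or.inr ha)) h.2⟩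
  | or F G ihF ihG =>
    intro hH h
    simp only [PForm.reduct, if_pos h]
    rcases h with h | h
    · exact Or.inl (ihF (fun a ha => hH (Or.inl ha)) h)
    · exact Or.inr (ihG (fun a ha => hH (Or.inr ha)) h)
  | imp F G ihF ihG =>
    intro hH h
    simp only [PForm.reduct, if_pos h]
    intro hF
    exact ihG hH (h (sat_of_sat_reduct X (X ∩ S) F hF))

/-- if S contains all head atoms of Γ and X ⊨ Γ then X ∩ S ⊨ Γ^X. -/
theorem stmt6 (Γ : Set (PForm α)) (S : Set α) (X : Set α)
    (hS : theoryHeadAtoms Γ ⊆ S) (hX : satTh X Γ) :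
    satTh (X ∩ S) (reductTh X Γ) := by
  rintro _ ⟨F, hF, rfl⟩
  exact sat_inter_reduct X S F
    (fun a ha => hS (Set.mem_biUnion hF ha)) (hX F hF)
end

section
/- Splitting Set Theorem: Let Γ₁ and Γ₂ be propositional theories such that no atom occurring in Γ₁ is a head atom of Γ₂, and let S be a set of atoms containing all head atoms of Γ₁ but no head atoms of Γ₂. Then a set X of atoms is a stable model of Γ₁ ∪ Γ₂ if and only if X ∩ S is a stable model of Γ₁ and X is a stable model of (X ∩ S) ∪ Γ₂ (where the atoms of X ∩ S are viewed as formulas). -/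
variable {α : Type}

namespace PForm

variable {X Y X' Y' : Set α}

theorem persist (hYX : Y ⊆ X) : ∀ F : PForm α, htSat Y X F → sat X F := by
  intro F
  induction F with
  | bot => exact fun h => h.elim
  | atom a => exact fun h => hYX h
  | and F G ihF ihG => exact fun h => ⟨ihF h.1, ihG h.2⟩
  | or F G ihF ihG => exact fun h => h.elim (fun h => Or.inl (ihF h)) (fun h => Or.inr (ihG h))
  | imp F G ihF ihG => exact fun h => h.2

theorem sat_reduct (hYX : Y ⊆ X) : ∀ F : PForm α, sat Y (reduct X F) ↔ htSat Y X F := by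
  intro F
  induction F with
  | bot => simp [reduct, sat, htSat]
  | atom a =>
    by_cases h : a ∈ X
    · simp [reduct, h, sat, htSat]
    · simp only [reduct, if_neg h]
      exact ⟨fun hh => hh.elim, fun hh => h (hYX hh)⟩
  | and F G ihF ihG =>
    by_cases h : sat X (PForm.and F G)
    · simp only [reduct, if_pos h]
      exact and_congr ihF ihG
    · simp only [reduct, if_neg h]
      exact ⟨fun hh => hh.elim, fun hh => h (persist hYX _ hh)⟩
  | or F G ihF ihG =>
    by_cases h : sat X (PForm.or F G)
    · simp only [reduct, if_pos h]
      exact or_congr ihF ihG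
    · simp only [reduct, if_neg h]
      exact ⟨fun hh => hh.elim, fun hh => h (persist hYX _ hh)⟩
  | imp F G ihF ihG =>
    by_cases h : sat X (PForm.imp F G)
    · simp only [reduct, if_pos h]
      constructor
      · exact fun hh => ⟨fun hf => ihG.mp (hh (ihF.mpr hf)), h⟩
      · exact fun hh hf => ihG.mpr (hh.1 (ihF.mp hf))
    · simp only [reduct, if_neg h]
      exact ⟨fun hh => hh.elim, fun hh => h hh.2⟩

theorem htSat_self : ∀ F : PForm α, htSat X X F ↔ sat X F := by
  intro F
  induction F with
  | bot => exact Iff.rfl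
  | atom a => exact Iff.rfl
  | and F G ihF ihG => exact and_congr ihF ihG
  | or F G ihF ihG => exact or_congr ihF ihG
  | imp F G ihF ihG =>
    constructor
    · exact fun h => h.2
    · exact fun h => ⟨fun hf => ihG.mpr (h (persist (subset_refl X) F hf)), h⟩

theorem sat_rel : ∀ F : PForm α, (∀ a ∈ atomsOf F, (a ∈ X ↔ a ∈ X')) →
    (sat X F ↔ sat X' F) := by
  intro F
  induction F with
  | bot => exact fun _ => Iff.rfl
  | atom a => exact fun h => h a rfl
  | and F G ihF ihG =>
    exact fun h => and_congr (ihF fun a ha => h a (Set.mem_union_left _ ha))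
      (ihG fun a ha => h a (Set.mem_union_right _ ha))
  | or F G ihF ihG =>
    exact fun h => or_congr (ihF fun a ha => h a (Set.mem_union_left _ ha))
      (ihG fun a ha => h a (Set.mem_union_right _ ha))
  | imp F G ihF ihG =>
    exact fun h => imp_congr (ihF fun a ha => h a (Set.mem_union_left _ ha))
      (ihG fun a ha => h a (Set.mem_union_right _ ha))

theorem htSat_rel : ∀ F : PForm α, (∀ a ∈ atomsOf F, (a ∈ Y ↔ a ∈ Y')) →
    (∀ a ∈ atomsOf F, (a ∈ X ↔ a ∈ X')) → (htSat Y X F ↔ htSat Y' X' F) := by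
  intro F
  induction F with
  | bot => exact fun _ _ => Iff.rfl
  | atom a => exact fun hY _ => hY a rfl
  | and F G ihF ihG =>
    exact fun hY hX => and_congr
      (ihF (fun a ha => hY a (Set.mem_union_left _ ha)) (fun a ha => hX a (Set.mem_union_left _ ha)))
      (ihG (fun a ha => hY a (Set.mem_union_right _ ha)) (fun a ha => hX a (Set.mem_union_right _ ha)))
  | or F G ihF ihG =>
    exact fun hY hX => or_congr
      (ihF (fun a ha => hY a (Set.mem_union_left _ ha)) (fun a ha => hX a (Set.mem_union_left _ ha)))
      (ihG (fun a ha => hY a (Set.mem_union_right _ ha)) (fun a ha => hX a (Set.mem_union_right _ ha)))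
  | imp F G ihF ihG =>
    intro hY hX
    exact and_congr
      (imp_congr
        (ihF (fun a ha => hY a (Set.mem_union_left _ ha)) (fun a ha => hX a (Set.mem_union_left _ ha)))
        (ihG (fun a ha => hY a (Set.mem_union_right _ ha)) (fun a ha => hX a (Set.mem_union_right _ ha))))
      (sat_rel (imp F G) hX)

theorem headH (hYX : Y ⊆ X) : ∀ F : PForm α,
    (∀ a ∈ headAtoms F, a ∈ X → a ∈ Y) → sat X F → htSat Y X F := by
  intro F
  induction F with
  | bot => exact fun _ h => h.elim
  | atom a => exact fun hh h => hh a rfl h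
  | and F G ihF ihG =>
    exact fun hh h => ⟨ihF (fun a ha => hh a (Set.mem_union_left _ ha)) h.1,
      ihG (fun a ha => hh a (Set.mem_union_right _ ha)) h.2⟩
  | or F G ihF ihG =>
    exact fun hh h => h.elim
      (fun h => Or.inl (ihF (fun a ha => hh a (Set.mem_union_left _ ha)) h))
      (fun h => Or.inr (ihG (fun a ha => hh a (Set.mem_union_right _ ha)) h))
  | imp F G ihF ihG =>
    exact fun hh h => ⟨fun hf => ihG hh (h (persist hYX F hf)), h⟩

end PForm

theorem stable_iff_ht (Γ : Set (PForm α)) (X : Set α) :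
    StableModel Γ X ↔ (satTh X Γ ∧ ∀ Y, Y ⊂ X → ¬ htSatTh Y X Γ) := by
  have hsat : ∀ Y : Set α, Y ⊆ X → (satTh Y (reductTh X Γ) ↔ htSatTh Y X Γ) := by
    intro Y hY
    constructor
    · intro h F hF
      exact (PForm.sat_reduct hY F).mp (h _ ⟨F, hF, rfl⟩)
    · rintro h F ⟨G, hG, rfl⟩
      exact (PForm.sat_reduct hY G).mpr (h G hG)
  constructor
  · rintro ⟨hh1, hh2⟩
    exact ⟨fun F hF => (PForm.htSat_self F).mp (((hsat X (subset_refl X)).mp hh1) F hF),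
      fun Y hY hh => hh2 Y hY ((hsat Y hY.subset).mpr hh)⟩
  · rintro ⟨hh1, hh2⟩
    exact ⟨(hsat X (subset_refl X)).mpr (fun F hF => (PForm.htSat_self F).mpr (hh1 F hF)),
      fun Y hY hh => hh2 Y hY ((hsat Y hY.subset).mp hh)⟩

theorem ht_heads {Γ : Set (PForm α)} {X : Set α}
    (hs : satTh X Γ) (hmin : ∀ Y, Y ⊂ X → ¬ htSatTh Y X Γ) :
    X ⊆ theoryHeadAtoms Γ := by
  intro a ha
  by_contra hna
  apply hmin (X \ {a}) ⟨Set.diff_subset, fun hsub => (hsub ha).2 rfl⟩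
  intro F hF
  refine PForm.headH Set.diff_subset F (fun b hb hbX => ⟨hbX, fun hba => ?_⟩) (hs F hF)
  exact hna (hba ▸ Set.mem_biUnion hF hb)

/-- Splitting Set Theorem. -/
theorem stmt8 (Γ₁ Γ₂ : Set (PForm α)) (S : Set α)
    (h1 : ∀ F ∈ Γ₁, ∀ a ∈ PForm.atomsOf F, a ∉ theoryHeadAtoms Γ₂)
    (h2 : theoryHeadAtoms Γ₁ ⊆ S)
    (h3 : ∀ a ∈ theoryHeadAtoms Γ₂, a ∉ S)
    (X : Set α) :
    StableModel (Γ₁ ∪ Γ₂) X ↔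
      (StableModel Γ₁ (X ∩ S) ∧
       StableModel ((PForm.atom '' (X ∩ S)) ∪ Γ₂) X) := by
  classical
  rw [stable_iff_ht, stable_iff_ht, stable_iff_ht]
  set A : Set (PForm α) := PForm.atom '' (X ∩ S) with hAdef
  -- agreement of X and X ∩ S on atoms of Γ₁, given X ⊆ S ∪ heads Γ₂
  have key : X ⊆ S ∪ theoryHeadAtoms Γ₂ →
      ∀ F ∈ Γ₁, ∀ a ∈ PForm.atomsOf F, (a ∈ X ↔ a ∈ X ∩ S) := by
    intro hXS F hF a ha
    constructor
    · intro haX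
      exact ⟨haX, (hXS haX).resolve_right (fun hh => h1 F hF a ha hh)⟩
    · exact fun hh => hh.1
  constructor
  · rintro ⟨hsat, hmin⟩
    have hXS : X ⊆ S ∪ theoryHeadAtoms Γ₂ := by
      intro a ha
      rcases Set.mem_iUnion₂.mp (ht_heads hsat hmin ha) with ⟨F, hF, haF⟩
      rcases hF with hF | hF
      · exact Or.inl (h2 (Set.mem_biUnion hF haF))
      · exact Or.inr (Set.mem_biUnion hF haF)
    have hagree := key hXS
    refine ⟨⟨?_, ?_⟩, ?_, ?_⟩
    · -- satTh (X ∩ S) Γ₁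
      intro F hF
      exact (PForm.sat_rel F (hagree F hF)).mp (hsat F (Set.mem_union_left _ hF))
    · -- minimality for Γ₁ w.r.t. X ∩ S
      intro Z hZ hZsat
      rcases Set.exists_of_ssubset hZ with ⟨a, haXS, haZ⟩
      have hdisj : ∀ F ∈ Γ₁, ∀ b ∈ PForm.atomsOf F, b ∉ X \ S := by
        intro F hF b hb hbd
        exact ((hXS hbd.1).resolve_left hbd.2 |> h1 F hF b hb)
      refine hmin (Z ∪ (X \ S)) ⟨?_, ?_⟩ ?_
      · exact Set.union_subset (hZ.subset.trans Set.inter_subset_left) Set.diff_subset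
      · intro hsub
        rcases hsub haXS.1 with h | h
        · exact haZ h
        · exact h.2 haXS.2
      · intro F hF
        rcases hF with hF | hF
        · refine (PForm.htSat_rel F ?_ (hagree F hF)).mpr (hZsat F hF)
          intro b hb
          constructor
          · rintro (h | h)
            · exact h
            · exact absurd h (hdisj F hF b hb)
          · exact fun h => Or.inl h
        · refine PForm.headH (Set.union_subset (hZ.subset.trans Set.inter_subset_left)
            Set.diff_subset) F ?_ (hsat F (Set.mem_union_right _ hF))
          intro b hb hbX
          have hbh : b ∈ theoryHeadAtoms Γ₂ := Set.mem_biUnion hF hb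
          exact Or.inr ⟨hbX, h3 b hbh⟩
    · -- satTh X (A ∪ Γ₂)
      intro F hF
      rcases hF with hF | hF
      · rcases hF with ⟨b, hb, rfl⟩
        exact hb.1
      · exact hsat F (Set.mem_union_right _ hF)
    · -- minimality for A ∪ Γ₂
      intro Y hY hsatY
      have hXSY : X ∩ S ⊆ Y := by
        intro b hb
        exact hsatY (PForm.atom b) (Set.mem_union_left _ ⟨b, hb, rfl⟩)
      refine hmin Y hY ?_
      intro F hF
      rcases hF with hF | hF
      · refine (PForm.htSat_rel F ?_ (fun a _ => Iff.rfl)).mpr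
          ((PForm.htSat_self F).mpr (hsat F (Set.mem_union_left _ hF)))
        intro b hb
        exact ⟨fun h => hY.subset h, fun h => hXSY ((hagree F hF b hb).mp h)⟩
      · exact hsatY F (Set.mem_union_right _ hF)
  · rintro ⟨⟨g1a, g1b⟩, g2a, g2b⟩
    have hXS : X ⊆ S ∪ theoryHeadAtoms Γ₂ := by
      intro a ha
      rcases Set.mem_iUnion₂.mp (ht_heads g2a g2b ha) with ⟨F, hF, haF⟩
      rcases hF with hF | hF
      · rcases hF with ⟨b, hb, rfl⟩
        exact Or.inl (haF ▸ hb.2)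
      · exact Or.inr (Set.mem_biUnion hF haF)
    have hagree := key hXS
    constructor
    · intro F hF
      rcases hF with hF | hF
      · exact (PForm.sat_rel F (hagree F hF)).mpr (g1a F hF)
      · exact g2a F (Set.mem_union_right _ hF)
    · intro Y hY hsatY
      by_cases hXSY : X ∩ S ⊆ Y
      · refine g2b Y hY ?_
        intro F hF
        rcases hF with hF | hF
        · rcases hF with ⟨b, hb, rfl⟩
          exact hXSY hb
        · exact hsatY F (Set.mem_union_right _ hF)
      · rcases Set.not_subset.mp hXSY with ⟨a, haXS, haY⟩
        refine g1b (Y ∩ S) ⟨?_, fun hsub => haY (hsub haXS).1⟩ ?_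
        · exact Set.inter_subset_inter_left S hY.subset
        · intro F hF
          refine (PForm.htSat_rel F ?_ (hagree F hF)).mp (hsatY F (Set.mem_union_left _ hF))
          intro b hb
          constructor
          · intro h
            exact ⟨h, ((hagree F hF b hb).mp (hY.subset h)).2⟩
          · exact fun h => h.1
end

section
/- Let A be the aggregate op⟨{F₁=w₁,...,Fₙ=wₙ}⟩ ≺ N and let G be the propositional formula ⋀_{I ⊆ {1,...,n} : ¬(op({wᵢ : i∈I}) ≺ N)} ((⋀_{i∈I} Fᵢ) → (⋁_{i∈Ī} Fᵢ)), where Ī = {1,...,n} \ I. Then (a) G is classically equivalent to A, and (b) for every set X of atoms, G^X is classically equivalent to A^X. -/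
variable {α : Type}

def listAnd : List (PForm α) → PForm α
  | [] => PForm.top
  | F :: l => PForm.and F (listAnd l)

def listOr : List (PForm α) → PForm α
  | [] => PForm.bot
  | F :: l => PForm.or F (listOr l)

noncomputable def finsetAnd {ι : Type} (s : Finset ι) (f : ι → PForm α) : PForm α :=
  listAnd (s.toList.map f)

noncomputable def finsetOr {ι : Type} (s : Finset ι) (f : ι → PForm α) : PForm α :=
  listOr (s.toList.map f)

open Classical in
/-- `satAgg X F w P` : X satisfies the aggregate op⟨{F₁=w₁,...,Fₙ=wₙ}⟩ ≺ N, where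
`P W` stands for `op(W) ≺ N`. -/
noncomputable def satAgg {n : ℕ} (X : Set α) (F : Fin n → PForm α) (w : Fin n → ℝ)
    (P : Multiset ℝ → Prop) : Prop :=
  P (Multiset.map w (Finset.filter (fun i => PForm.sat X (F i)) Finset.univ).val)

open Classical in
/-- The propositional formula corresponding to the aggregate:
⋀_{I : ¬ P(W_I)} ((⋀_{i∈I} Fᵢ) → (⋁_{i∈Ī} Fᵢ)). -/
noncomputable def aggFormula {n : ℕ} (F : Fin n → PForm α) (w : Fin n → ℝ)
    (P : Multiset ℝ → Prop) : PForm α :=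
  finsetAnd (Finset.filter (fun I : Finset (Fin n) => ¬ P (Multiset.map w I.val)) Finset.univ)
    (fun I => PForm.imp (finsetAnd I F) (finsetOr Iᶜ F))

/-!
With `T` the set of indices `i` such that `X ⊨ Fᵢ`, the conjunct of `G` indexed by `I` fails in
`X` exactly when `I ⊆ T` and no `Fᵢ` with `i ∉ I` holds, i.e. when `I = T`. So `G` holds iff `T` is not among the
indices `I` with `¬ op(W_I) ≺ N`, i.e. iff `X ⊨ A`. For the reduct, `Y ⊨ H^X` already forces
`X ⊨ H`, so `^X` commutes with `∧` and `∨` up to equivalence and only an implication contributes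
the extra condition `X ⊨ H`; hence `G^X` is `X ⊨ G` together with the same argument run on the
truth values of the `Fᵢ^X` in `Y`.
-/

namespace PForm

variable {X Y : Set α}

theorem sat_of_sat_reduct (G : PForm α) (h : sat Y (reduct X G)) : sat X G := by
  cases G <;> simp only [reduct] at h <;> (try split at h) <;> simp_all [sat]

@[simp]
theorem sat_reduct_top : sat Y (reduct X (top : PForm α)) := by
  simp [top, reduct, sat]

@[simp]
theorem sat_reduct_and (F G : PForm α) :
    sat Y (reduct X (and F G)) ↔ sat Y (reduct X F) ∧ sat Y (reduct X G) := by
  simp only [reduct]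
  split
  · rfl
  · exact ⟨False.elim, fun h => by
      simp_all [sat, sat_of_sat_reduct F h.1, sat_of_sat_reduct G h.2]⟩

@[simp]
theorem sat_reduct_or (F G : PForm α) :
    sat Y (reduct X (or F G)) ↔ sat Y (reduct X F) ∨ sat Y (reduct X G) := by
  simp only [reduct]
  split
  · rfl
  · refine ⟨False.elim, fun h => ?_⟩
    rcases h with h | h <;> simp_all [sat, sat_of_sat_reduct _ h]

theorem sat_reduct_imp (F G : PForm α) :
    sat Y (reduct X (imp F G)) ↔ sat X (imp F G) ∧ (sat Y (reduct X F) → sat Y (reduct X G)) := by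
  simp only [reduct]
  split <;> simp_all [sat]

end PForm

open PForm

section Connectives

variable {ι : Type} {X Y : Set α}

theorem sat_finsetAnd (s : Finset ι) (f : ι → PForm α) :
    sat X (finsetAnd s f) ↔ ∀ i ∈ s, sat X (f i) := by
  suffices ∀ l : List (PForm α), sat X (listAnd l) ↔ ∀ G ∈ l, sat X G by simp [finsetAnd, this]
  intro l
  induction l <;> simp_all [listAnd, top, sat]

theorem sat_finsetOr (s : Finset ι) (f : ι → PForm α) :
    sat X (finsetOr s f) ↔ ∃ i ∈ s, sat X (f i) := by
  suffices ∀ l : List (PForm α), sat X (listOr l) ↔ ∃ G ∈ l, sat X G by simp [finsetOr, this]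
  intro l
  induction l <;> simp_all [listOr, sat]

theorem sat_reduct_finsetAnd (s : Finset ι) (f : ι → PForm α) :
    sat Y (reduct X (finsetAnd s f)) ↔ ∀ i ∈ s, sat Y (reduct X (f i)) := by
  suffices ∀ l : List (PForm α), sat Y (reduct X (listAnd l)) ↔ ∀ G ∈ l, sat Y (reduct X G) by
    simp [finsetAnd, this]
  intro l
  induction l <;> simp_all [listAnd]

theorem sat_reduct_finsetOr (s : Finset ι) (f : ι → PForm α) :
    sat Y (reduct X (finsetOr s f)) ↔ ∃ i ∈ s, sat Y (reduct X (f i)) := by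
  suffices ∀ l : List (PForm α), sat Y (reduct X (listOr l)) ↔ ∃ G ∈ l, sat Y (reduct X G) by
    simp [finsetOr, this]
  intro l
  induction l <;> simp_all [listOr, reduct.eq_1, sat]

end Connectives

theorem Finset.forall_not_imp_exists_mem_compl_iff {ι : Type} [Fintype ι] [DecidableEq ι]
    (Q : Finset ι → Prop) (v : ι → Prop) [DecidablePred v] :
    (∀ I : Finset ι, ¬ Q I → (∀ i ∈ I, v i) → ∃ i ∈ Iᶜ, v i) ↔ Q (univ.filter v) := by
  constructor
  · intro h
    by_contra hQ
    obtain ⟨i, hi, hvi⟩ := h _ hQ fun i hi => (mem_filter.mp hi).2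
    exact mem_compl.mp hi (mem_filter.mpr ⟨mem_univ i, hvi⟩)
  · intro hQ I hI hIv
    have hsub : I ⊂ univ.filter v :=
      ssubset_of_subset_of_ne (fun i hi => mem_filter.mpr ⟨mem_univ i, hIv i hi⟩)
        (by rintro rfl; exact hI hQ)
    obtain ⟨i, hiv, hiI⟩ := exists_of_ssubset hsub
    exact ⟨i, mem_compl.mpr hiI, (mem_filter.mp hiv).2⟩

section Aggregate

variable {n : ℕ} (F : Fin n → PForm α) (w : Fin n → ℝ) (P : Multiset ℝ → Prop) {X Y : Set α}

theorem sat_aggFormula_iff :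
    sat X (aggFormula F w P) ↔
      ∀ I : Finset (Fin n), ¬ P (I.val.map w) → (∀ i ∈ I, sat X (F i)) → ∃ i ∈ Iᶜ, sat X (F i) := by
  simp [aggFormula, sat_finsetAnd, sat_finsetOr, sat]

theorem sat_reduct_aggFormula_iff :
    sat Y (reduct X (aggFormula F w P)) ↔ sat X (aggFormula F w P) ∧
      ∀ I : Finset (Fin n), ¬ P (I.val.map w) →
        (∀ i ∈ I, sat Y (reduct X (F i))) → ∃ i ∈ Iᶜ, sat Y (reduct X (F i)) := by
  simp only [aggFormula, sat_reduct_finsetAnd, sat_reduct_imp, sat_reduct_finsetOr,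
    sat_finsetAnd (X := X), Finset.mem_filter, Finset.mem_univ, true_and, forall_and]

end Aggregate

open Classical in
/-- the formula G corresponding to an aggregate A is classically equivalent
to A, and G^X is classically equivalent to A^X (where A^X is the aggregate on the F_i^X if
X ⊨ A, and ⊥ otherwise). -/
theorem stmt13 {n : ℕ} (F : Fin n → PForm α) (w : Fin n → ℝ) (P : Multiset ℝ → Prop) :
    (∀ X : Set α, PForm.sat X (aggFormula F w P) ↔ satAgg X F w P) ∧
    (∀ X Y : Set α,
      PForm.sat Y (PForm.reduct X (aggFormula F w P)) ↔
        (satAgg X F w P ∧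
          P (Multiset.map w
            (Finset.filter (fun i => PForm.sat Y (PForm.reduct X (F i))) Finset.univ).val))) := by
  have sat_iff : ∀ X : Set α, sat X (aggFormula F w P) ↔ satAgg X F w P := fun X =>
    (sat_aggFormula_iff F w P).trans
      (Finset.forall_not_imp_exists_mem_compl_iff (fun I => P (I.val.map w)) _)
  refine ⟨sat_iff, fun X Y => ?_⟩
  rw [sat_reduct_aggFormula_iff, sat_iff,
    Finset.forall_not_imp_exists_mem_compl_iff (fun I => P (I.val.map w))]
end
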